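/- arXiv:1804.08147 — 3 statements merged into one kernel-verified Lean document; each statement's English description precedes it below -/
import Mathlib

section
/- Let G be a finite simple connected graph of order at least 2. Then rrad(G) ≤ rdiam(G) ≤ rrad(G) + diam(G), where diam(G) is the diameter of G. -/
open SimpleGraph

variable {V : Type*}

/-- `S` is a resolving set of `G`. -/
def IsResolving (G : SimpleGraph V) (S : Set V) : Prop :=
  ∀ x y : V, x ≠ y → ∃ z ∈ S, G.dist z x ≠ G.dist z y

/-- `S` is a connected resolving set of `G`. -/
def IsConnResolving (G : SimpleGraph V) (S : Set V) : Prop :=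
  IsResolving G S ∧ (G.induce S).Connected

/-- The metric dimension of `G`. -/
noncomputable def metricDim (G : SimpleGraph V) : ℕ :=
  sInf {n | ∃ S : Set V, IsResolving G S ∧ S.ncard = n}

/-- The connected metric dimension of `G`. -/
noncomputable def cdim (G : SimpleGraph V) : ℕ :=
  sInf {n | ∃ S : Set V, IsConnResolving G S ∧ S.ncard = n}

/-- The connected metric dimension of `G` at a vertex `v`. -/
noncomputable def cdimAt (G : SimpleGraph V) (v : V) : ℕ :=
  sInf {n | ∃ S : Set V, IsConnResolving G S ∧ v ∈ S ∧ S.ncard = n}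

/-- The resolving radius of `G`: the minimum of `cdim_G(v)` over all vertices `v`. -/
noncomputable def rrad (G : SimpleGraph V) : ℕ :=
  sInf {n | ∃ v : V, cdimAt G v = n}

/-- The resolving diameter of `G`: the maximum of `cdim_G(v)` over all vertices `v`. -/
noncomputable def rdiam (G : SimpleGraph V) : ℕ :=
  sSup {n | ∃ v : V, cdimAt G v = n}

/-- The diameter of `G`: the maximum of `d(x,y)` over all pairs of vertices. -/
noncomputable def graphDiam (G : SimpleGraph V) : ℕ :=
  sSup {n | ∃ x y : V, G.dist x y = n}

/-! Adding the vertices of a shortest `u`–`v` path to a minimum connected resolving set through `u`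
gives a connected resolving set through `v` with at most `d(u, v)` new vertices, so
`cdim_G(v) ≤ cdim_G(u) + d(u, v)`. Taking `u` with `cdim_G(u) = rrad(G)` bounds every
`cdim_G(v)` by `rrad(G) + diam(G)`. -/

namespace SimpleGraph

variable {G : SimpleGraph V}

theorem IsResolving.mono {S T : Set V} (hST : S ⊆ T) (hS : IsResolving G S) :
    IsResolving G T := fun x y hxy =>
  let ⟨z, hz, hzd⟩ := hS x y hxy
  ⟨z, hST hz, hzd⟩

theorem Connected.isConnResolving_univ (hG : G.Connected) : IsConnResolving G Set.univ := by
  refine ⟨fun x y hxy => ⟨x, Set.mem_univ x, ?_⟩, (induceUnivIso G).connected_iff.mpr hG⟩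
  rw [dist_self]
  exact ((hG x y).pos_dist_of_ne hxy).ne

theorem IsConnResolving.union_support {S : Set V} {u v : V} (hS : IsConnResolving G S)
    (hu : u ∈ S) (p : G.Walk u v) : IsConnResolving G (S ∪ {x | x ∈ p.support}) :=
  ⟨hS.1.mono Set.subset_union_left,
    induce_union_connected hS.2.preconnected p.connected_induce_support.preconnected
      ⟨u, hu, p.start_mem_support⟩⟩

theorem ncard_union_support_le {S : Set V} {u v : V} (hu : u ∈ S) (p : G.Walk u v) :
    (S ∪ {x | x ∈ p.support}).ncard ≤ S.ncard + p.length := by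
  classical
  have hunion : S ∪ {x | x ∈ p.support} = S ∪ ↑p.support.tail.toFinset := by
    ext x
    by_cases hx : x = u <;> simp [hx, hu, p.mem_support_iff]
  calc (S ∪ {x | x ∈ p.support}).ncard
      ≤ S.ncard + (p.support.tail.toFinset : Set V).ncard := hunion ▸ Set.ncard_union_le _ _
    _ ≤ S.ncard + p.length := by
      rw [Set.ncard_coe_finset]
      gcongr
      exact p.support.tail.toFinset_card_le.trans_eq (by simp)

theorem Connected.exists_isConnResolving_ncard_eq_cdimAt (hG : G.Connected) (u : V) :
    ∃ S : Set V, IsConnResolving G S ∧ u ∈ S ∧ S.ncard = cdimAt G u :=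
  Nat.sInf_mem (s := {n | ∃ S : Set V, IsConnResolving G S ∧ u ∈ S ∧ S.ncard = n})
    ⟨_, Set.univ, hG.isConnResolving_univ, Set.mem_univ u, rfl⟩

theorem Connected.cdimAt_le_cdimAt_add_dist (hG : G.Connected) (u v : V) :
    cdimAt G v ≤ cdimAt G u + G.dist u v := by
  obtain ⟨S, hS, huS, hScard⟩ := hG.exists_isConnResolving_ncard_eq_cdimAt u
  obtain ⟨p, hp⟩ := hG.exists_walk_length_eq_dist u v
  calc cdimAt G v ≤ (S ∪ {x | x ∈ p.support}).ncard :=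
        Nat.sInf_le ⟨_, hS.union_support huS p, Or.inr p.end_mem_support, rfl⟩
    _ ≤ cdimAt G u + G.dist u v := hScard ▸ hp ▸ ncard_union_support_le huS p

theorem exists_cdimAt_eq_rrad [Nonempty V] : ∃ u, cdimAt G u = rrad G :=
  Nat.sInf_mem (Set.range_nonempty (cdimAt G))

theorem cdimAt_le_rdiam [Finite V] (v : V) : cdimAt G v ≤ rdiam G :=
  le_csSup (Set.finite_range (cdimAt G)).bddAbove ⟨v, rfl⟩

theorem dist_le_graphDiam [Finite V] (x y : V) : G.dist x y ≤ graphDiam G := by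
  refine le_csSup ((Set.finite_range fun q : V × V => G.dist q.1 q.2).bddAbove.mono ?_) ⟨x, y, rfl⟩
  rintro _ ⟨a, b, rfl⟩
  exact ⟨(a, b), rfl⟩

theorem rrad_le_rdiam [Finite V] [Nonempty V] : rrad G ≤ rdiam G :=
  (Nat.sInf_le (Set.mem_range_self (f := cdimAt G) (Classical.arbitrary V))).trans
    (cdimAt_le_rdiam _)

theorem Connected.rdiam_le_rrad_add_graphDiam [Finite V] (hG : G.Connected) :
    rdiam G ≤ rrad G + graphDiam G := by
  have := hG.nonempty
  obtain ⟨u, hu⟩ := exists_cdimAt_eq_rrad (G := G)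
  refine csSup_le (Set.range_nonempty (cdimAt G)) ?_
  rintro _ ⟨v, rfl⟩
  calc cdimAt G v ≤ cdimAt G u + G.dist u v := hG.cdimAt_le_cdimAt_add_dist u v
    _ ≤ rrad G + graphDiam G := hu ▸ Nat.add_le_add_left (dist_le_graphDiam u v) _

end SimpleGraph

theorem stmt_6_general {V : Type*} [Fintype V] (G : SimpleGraph V) (hG : G.Connected) :
    rrad G ≤ rdiam G ∧ rdiam G ≤ rrad G + graphDiam G :=
  have := hG.nonempty
  ⟨rrad_le_rdiam, hG.rdiam_le_rrad_add_graphDiam⟩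

/-- For a finite simple connected graph `G` of order at least 2,
`rrad(G) ≤ rdiam(G) ≤ rrad(G) + diam(G)`. -/
theorem stmt_6 {V : Type*} [Fintype V] (G : SimpleGraph V) (hG : G.Connected)
    (hn : 2 ≤ Fintype.card V) :
    rrad G ≤ rdiam G ∧ rdiam G ≤ rrad G + graphDiam G :=
  stmt_6_general G hG
end

section
/- Let T be a finite tree of order at least 2 that is not a path. Let D denote the set of vertices of T consisting of all interior degree-two vertices together with all major vertices of terminal degree zero. Then cdim(T) = |D| + σ(T), where σ(T) is the number of end vertices of T. -/
open SimpleGraph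

variable {V : Type*}

/-- The degree of a vertex, as the size of its neighbor set. -/
noncomputable def deg (G : SimpleGraph V) (v : V) : ℕ := (G.neighborSet v).ncard

/-- An end vertex is a vertex of degree one. -/
def IsEndVertex (G : SimpleGraph V) (v : V) : Prop := deg G v = 1

/-- A major vertex is a vertex of degree at least three. -/
def IsMajorVertex (G : SimpleGraph V) (v : V) : Prop := 3 ≤ deg G v

/-- `ℓ` is a terminal vertex of the major vertex `v` if `ℓ` is an end vertex and
`d(ℓ,v) < d(ℓ,w)` for every other major vertex `w`. -/
def IsTerminalOf (G : SimpleGraph V) (ℓ v : V) : Prop :=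
  IsEndVertex G ℓ ∧ IsMajorVertex G v ∧
    ∀ w : V, IsMajorVertex G w → w ≠ v → G.dist ℓ v < G.dist ℓ w

/-- An exterior major vertex is a major vertex with at least one terminal vertex. -/
def IsExteriorMajor (G : SimpleGraph V) (v : V) : Prop :=
  IsMajorVertex G v ∧ ∃ ℓ : V, IsTerminalOf G ℓ v

/-- The terminal degree of a vertex `v`: the number of terminal vertices of `v`. -/
noncomputable def terminalDeg (G : SimpleGraph V) (v : V) : ℕ :=
  {ℓ : V | IsTerminalOf G ℓ v}.ncard

/-- An exterior degree-two vertex: a vertex of degree two lying on the path from some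
terminal vertex to its major vertex (in a tree, `x` lies on the `ℓ`-`v` path iff
`d(ℓ,x) + d(x,v) = d(ℓ,v)`). -/
def IsExteriorDeg2 (G : SimpleGraph V) (x : V) : Prop :=
  deg G x = 2 ∧ ∃ v ℓ : V, IsTerminalOf G ℓ v ∧ G.dist ℓ x + G.dist x v = G.dist ℓ v

/-- An interior degree-two vertex: a degree-two vertex that is not exterior. -/
def IsInteriorDeg2 (G : SimpleGraph V) (x : V) : Prop :=
  deg G x = 2 ∧ ¬ IsExteriorDeg2 G x


/-!
A tree with a major vertex splits into its core (the major vertices and the interior degree-two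
vertices) and pairwise disjoint legs, one for each end vertex `ℓ`: the path from `ℓ` up to, but
excluding, the major vertex of which `ℓ` is a terminal vertex.

A connected resolving set `S` contains the core. At any vertex at most one branch misses `S`,
since the neighbours in two such branches would not be resolved. A branch missing `S` has at most
one vertex at each distance, hence no major vertex, so both branches at an interior degree-two
vertex meet `S` (otherwise that vertex would be exterior). And a connected set of vertices of a
tree contains every geodesic between its elements. For the same reason at most one leg at each
exterior major vertex misses `S`, so `|S| ≥ |core| + σ(T) - #(exterior major vertices)`, which
is `|D| + σ(T)`.

Conversely, the core together with the top vertex of all legs but one at each exterior major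
vertex is geodesically convex, hence connected, and resolving, and has exactly this size.
-/

namespace SimpleGraph

variable {G T : SimpleGraph V}

def Between (G : SimpleGraph V) (a x b : V) : Prop :=
  G.dist a x + G.dist x b = G.dist a b

/-- For adjacent `c` and `g`, the vertices seen from `c` through `g`: in a tree, the component
of `g` after deleting the edge `cg`. -/
def branch (G : SimpleGraph V) (c g : V) : Set V :=
  {x | G.dist g x + 1 = G.dist c x}

lemma Between.symm {a x b : V} (h : G.Between a x b) : G.Between b x a := by
  rw [Between, dist_comm, add_comm, dist_comm (u := x), dist_comm (u := b)]
  exact h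

lemma between_self_left (a b : V) : G.Between a a b := by
  simp [Between]

lemma between_self_right (a b : V) : G.Between a b b := by
  simp [Between]

lemma self_notMem_branch (c g : V) : c ∉ G.branch c g := by
  simp [branch]

lemma Adj.mem_branch {c g : V} (h : G.Adj c g) : g ∈ G.branch c g := by
  simp [branch, dist_eq_one_iff_adj.mpr h]

lemma Adj.between_of_mem_branch {c g x : V} (h : G.Adj c g) (hx : x ∈ G.branch c g) :
    G.Between c g x := by
  rw [Between, dist_eq_one_iff_adj.mpr h]
  exact (add_comm _ _).trans hx

lemma Connected.exists_adj_mem_branch (hG : G.Connected) {x y : V} (h : x ≠ y) :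
    ∃ g, G.Adj x g ∧ y ∈ G.branch x g := by
  obtain ⟨p, hp⟩ := hG.exists_walk_length_eq_dist x y
  cases p with
  | nil => exact absurd rfl h
  | @cons _ g _ hadj q =>
    refine ⟨g, hadj, le_antisymm ?_ ?_⟩
    · have := dist_le q
      rw [Walk.length_cons] at hp
      omega
    · have := hG.dist_triangle (u := x) (v := g) (w := y)
      rw [dist_eq_one_iff_adj.mpr hadj] at this
      omega

open Classical in
/-- The first vertex on the way from `c` to `y` (junk value `c` if `y = c`). -/
noncomputable def gate (G : SimpleGraph V) (c y : V) : V :=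
  if h : ∃ g, G.Adj c g ∧ y ∈ G.branch c g then h.choose else c

lemma Connected.gate_spec (hG : G.Connected) {c y : V} (h : c ≠ y) :
    G.Adj c (G.gate c y) ∧ y ∈ G.branch c (G.gate c y) := by
  have hex := hG.exists_adj_mem_branch h
  rw [gate, dif_pos hex]
  exact hex.choose_spec

lemma Connected.mem_branch_of_between (hG : G.Connected) {c g t x : V} (hg : G.Adj c g)
    (ht : t ∈ G.branch c g) (h : G.Between c t x) : x ∈ G.branch c g := by
  have h₁ : G.dist g x ≤ G.dist g t + G.dist t x := hG.dist_triangle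
  have h₂ : G.dist c x ≤ G.dist c g + G.dist g x := hG.dist_triangle
  rw [dist_eq_one_iff_adj.mpr hg] at h₂
  unfold branch Between at *
  simp only [Set.mem_ofPred_eq] at *
  omega

lemma Connected.not_between_of_mem_branch (hG : G.Connected) {m g a b : V}
    (ha : a ∈ G.branch m g) (hb : b ∈ G.branch m g) : ¬ G.Between a m b := by
  intro h
  have := hG.dist_triangle (u := a) (v := g) (w := b)
  have h₁ : G.dist a g = G.dist g a := dist_comm
  have h₂ : G.dist a m = G.dist m a := dist_comm
  unfold branch Between at *
  simp only [Set.mem_ofPred_eq] at *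
  omega

lemma Connected.between_trans_right (hG : G.Connected) {w x y z : V} (h₁ : G.Between w x z)
    (h₂ : G.Between x y z) : G.Between w y z := by
  have := hG.dist_triangle (u := w) (v := x) (w := y)
  have := hG.dist_triangle (u := w) (v := y) (w := z)
  unfold Between at *
  omega

lemma Connected.not_between_of_between_of_between (hG : G.Connected) {a b s t : V}
    (ha : G.Between a s t) (hb : G.Between b s t) (hts : t ≠ s) : ¬ G.Between a t b := by
  intro h
  have := hG.dist_triangle (u := a) (v := s) (w := b)
  have := hG.pos_dist_of_ne hts
  have c₁ : G.dist b s = G.dist s b := dist_comm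
  have c₂ : G.dist s t = G.dist t s := dist_comm
  have c₃ : G.dist b t = G.dist t b := dist_comm
  unfold Between at *
  omega

lemma IsTree.length_eq_dist (hT : T.IsTree) {u v : V} {p : T.Walk u v} (hp : p.IsPath) :
    p.length = T.dist u v := by
  obtain ⟨q, hq, hlen⟩ := hT.connected.exists_path_of_dist u v
  have : p = q :=
    congrArg Subtype.val ((hT.isAcyclic.subsingleton_path u v).elim ⟨p, hp⟩ ⟨q, hq⟩)
  rw [this, hlen]

lemma IsTree.between_of_mem_support (hT : T.IsTree) {u v t : V} {p : T.Walk u v}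
    (hp : p.IsPath) (ht : t ∈ p.support) : T.Between u t v := by
  classical
  have h := congrArg Walk.length (p.take_spec ht)
  rwa [Walk.length_append, hT.length_eq_dist (hp.takeUntil ht),
    hT.length_eq_dist (hp.dropUntil ht), hT.length_eq_dist hp] at h

/-- Two geodesics through `t` make up the unique path, which every walk contains. -/
lemma IsTree.mem_support_of_between (hT : T.IsTree) {u v t : V} (h : T.Between u t v)
    (p : T.Walk u v) : t ∈ p.support := by
  classical
  obtain ⟨q₁, hq₁⟩ := hT.connected.exists_walk_length_eq_dist u t
  obtain ⟨q₂, hq₂⟩ := hT.connected.exists_walk_length_eq_dist t v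
  have hq : (q₁.append q₂).IsPath :=
    Walk.isPath_of_length_eq_dist _ (by rw [Walk.length_append, hq₁, hq₂]; exact h)
  have hbypass : p.bypass = q₁.append q₂ := congrArg Subtype.val
    ((hT.isAcyclic.subsingleton_path u v).elim ⟨_, p.bypass_isPath⟩ ⟨_, hq⟩)
  apply p.support_bypass_subset_support
  rw [hbypass, Walk.mem_support_append_iff]
  exact Or.inl q₁.end_mem_support

lemma IsTree.eq_of_between_of_dist_eq (hT : T.IsTree) {a b x y : V} (hx : T.Between a x b)
    (hy : T.Between a y b) (h : T.dist a x = T.dist a y) : x = y := by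
  classical
  obtain ⟨p, hp, -⟩ := hT.connected.exists_path_of_dist a b
  have hx' := hT.mem_support_of_between hx p
  have hy' := hT.mem_support_of_between hy p
  rw [← p.getVert_length_takeUntil hx', ← p.getVert_length_takeUntil hy',
    hT.length_eq_dist (hp.takeUntil hx'), hT.length_eq_dist (hp.takeUntil hy'), h]

lemma IsTree.eq_of_mem_branch (hT : T.IsTree) {c g g' x : V} (hg : T.Adj c g)
    (hg' : T.Adj c g') (hx : x ∈ T.branch c g) (hx' : x ∈ T.branch c g') : g = g' :=
  hT.eq_of_between_of_dist_eq (hg.between_of_mem_branch hx) (hg'.between_of_mem_branch hx')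
    (by rw [dist_eq_one_iff_adj.mpr hg, dist_eq_one_iff_adj.mpr hg'])

lemma IsTree.between_of_mem_branch_of_ne (hT : T.IsTree) {m g₁ g₂ x y : V} (h₁ : T.Adj m g₁)
    (h₂ : T.Adj m g₂) (hne : g₁ ≠ g₂) (hx : x ∈ T.branch m g₁) (hy : y ∈ T.branch m g₂) :
    T.Between x m y := by
  classical
  obtain ⟨p, hp, -⟩ := hT.connected.exists_path_of_dist x m
  obtain ⟨q, hq, -⟩ := hT.connected.exists_path_of_dist m y
  suffices hpq : (p.append q).IsPath by
    have := hT.length_eq_dist hpq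
    rwa [Walk.length_append, hT.length_eq_dist hp, hT.length_eq_dist hq] at this
  rw [Walk.isPath_def, Walk.support_append, List.nodup_append]
  refine ⟨hp.support_nodup, hq.support_nodup.tail, fun t htp t' htq hteq => ?_⟩
  subst hteq
  have htm : t ≠ m := by
    rintro rfl
    have := hq.support_nodup
    rw [← q.cons_tail_support] at this
    exact (List.nodup_cons.mp this).1 htq
  -- the first step from `m` towards a common vertex `t` would lead to both `x` and `y`
  obtain ⟨g, hg, ht⟩ := hT.connected.exists_adj_mem_branch htm.symm
  have hgx := hT.connected.mem_branch_of_between hg ht (hT.between_of_mem_support hp htp).symm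
  have hgy := hT.connected.mem_branch_of_between hg ht
    (hT.between_of_mem_support hq (List.mem_of_mem_tail htq))
  exact hne ((hT.eq_of_mem_branch hg h₁ hgx hx).symm.trans (hT.eq_of_mem_branch hg h₂ hgy hy))

lemma IsTree.between_of_notMem_branch (hT : T.IsTree) {c g x z : V} (hg : T.Adj c g)
    (hx : x ∈ T.branch c g) (hz : z ∉ T.branch c g) : T.Between z c x := by
  obtain rfl | hzc := eq_or_ne z c
  · exact between_self_left _ _
  obtain ⟨g', hg', hz'⟩ := hT.connected.exists_adj_mem_branch hzc.symm
  exact hT.between_of_mem_branch_of_ne hg' hg (by rintro rfl; exact hz hz') hz' hx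

lemma IsTree.mem_branch_or_between_of_adj (hT : T.IsTree) {x y : V} (hy : T.Adj x y) (c : V) :
    c ∈ T.branch x y ∨ T.Between c x y := by
  rcases hT.dist_eq_dist_add_one_of_adj c hy with h | h
  · left
    rw [branch, Set.mem_ofPred_eq, dist_comm, dist_comm (u := x)]
    exact h.symm
  · right
    rw [Between, dist_eq_one_iff_adj.mpr hy, h]

lemma IsTree.between_of_adj_of_ne (hT : T.IsTree) {c x w y : V} (hw : T.Adj x w)
    (hcw : c ∈ T.branch x w) (hy : T.Adj x y) (hyw : y ≠ w) : T.Between c x y :=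
  (hT.mem_branch_or_between_of_adj hy c).resolve_left fun hc =>
    hyw (hT.eq_of_mem_branch hy hw hc hcw)

lemma IsTree.mem_of_between_of_connected_induce (hT : T.IsTree) {S : Set V}
    (hS : (T.induce S).Connected) {a b t : V} (ha : a ∈ S) (hb : b ∈ S)
    (h : T.Between a t b) : t ∈ S := by
  obtain ⟨w⟩ := hS.preconnected ⟨a, ha⟩ ⟨b, hb⟩
  have : t ∈ (w.map (Embedding.induce S).toHom).support := hT.mem_support_of_between h _
  rw [Walk.support_map, List.mem_map] at this
  obtain ⟨⟨t', ht'⟩, -, rfl⟩ := this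
  exact ht'

lemma IsTree.connected_induce_of_between_mem (hT : T.IsTree) {S : Set V} (hS : S.Nonempty)
    (h : ∀ a ∈ S, ∀ b ∈ S, ∀ t, T.Between a t b → t ∈ S) : (T.induce S).Connected := by
  obtain ⟨u, hu⟩ := hS
  refine induce_connected_of_patches u hu fun {v} hv => ?_
  obtain ⟨p, hp, -⟩ := hT.connected.exists_path_of_dist u v
  exact ⟨{x | x ∈ p.support}, fun x hx => h u hu v hv x (hT.between_of_mem_support hp hx),
    p.start_mem_support, p.end_mem_support, p.connected_induce_support _ _⟩

section Finite

variable [Finite V]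

lemma IsTree.exists_median (hT : T.IsTree) (a b c : V) :
    ∃ m, T.Between a m b ∧ T.Between a m c ∧ T.Between b m c := by
  obtain ⟨m, ⟨hab, hac⟩, hmax⟩ := Set.exists_max_image {m | T.Between a m b ∧ T.Between a m c}
    (T.dist a) (Set.toFinite _) ⟨a, between_self_left _ _, between_self_left _ _⟩
  refine ⟨m, hab, hac, ?_⟩
  obtain rfl | hmb := eq_or_ne m b
  · exact between_self_left _ _
  obtain rfl | hmc := eq_or_ne m c
  · exact between_self_right _ _
  obtain ⟨gb, hgb, hb⟩ := hT.connected.exists_adj_mem_branch hmb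
  obtain ⟨gc, hgc, hc⟩ := hT.connected.exists_adj_mem_branch hmc
  refine hT.between_of_mem_branch_of_ne hgb hgc (fun h => ?_) hb hc
  subst h
  -- otherwise one more step towards `b` and `c` would stay between `a` and both
  have hm : T.dist m gb = 1 := dist_eq_one_iff_adj.mpr hgb
  have t₁ : T.dist a gb ≤ T.dist a m + T.dist m gb := hT.connected.dist_triangle
  have t₂ : T.dist a b ≤ T.dist a gb + T.dist gb b := hT.connected.dist_triangle
  have t₃ : T.dist a c ≤ T.dist a gb + T.dist gb c := hT.connected.dist_triangle
  unfold Between branch at *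
  simp only [Set.mem_ofPred_eq] at *
  have := hmax gb ⟨by omega, by omega⟩
  omega

lemma IsTree.exists_median_ne_of_dist_eq (hT : T.IsTree) {r x y : V} (hne : x ≠ y)
    (h : T.dist r x = T.dist r y) :
    ∃ m, T.Between x m y ∧ T.Between x m r ∧ T.Between y m r ∧ m ≠ x ∧ m ≠ y := by
  obtain ⟨m, hxy, hxr, hyr⟩ := hT.exists_median x y r
  have c₁ : T.dist x r = T.dist r x := dist_comm
  have c₂ : T.dist y r = T.dist r y := dist_comm
  refine ⟨m, hxy, hxr, hyr, ?_, ?_⟩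
  · rintro rfl
    have : T.dist y m = 0 := by unfold Between at hyr; omega
    exact hne ((hT.connected.dist_eq_zero_iff).mp this).symm
  · rintro rfl
    have : T.dist x m = 0 := by unfold Between at hxr; omega
    exact hne ((hT.connected.dist_eq_zero_iff).mp this)

lemma deg_pos_of_adj {v w : V} (h : G.Adj v w) : 0 < deg G v :=
  (Set.ncard_pos (Set.toFinite _)).mpr ⟨w, h⟩

lemma two_le_deg {v g₁ g₂ : V} (h₁ : G.Adj v g₁) (h₂ : G.Adj v g₂) (hne : g₁ ≠ g₂) :
    2 ≤ deg G v :=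
  (Set.one_lt_ncard_iff (Set.toFinite _)).mpr ⟨g₁, g₂, h₁, h₂, hne⟩

lemma three_le_deg {v g₁ g₂ g₃ : V} (h₁ : G.Adj v g₁) (h₂ : G.Adj v g₂) (h₃ : G.Adj v g₃)
    (h₁₂ : g₁ ≠ g₂) (h₁₃ : g₁ ≠ g₃) (h₂₃ : g₂ ≠ g₃) : 3 ≤ deg G v :=
  (Set.two_lt_ncard_iff (Set.toFinite _)).mpr ⟨g₁, g₂, g₃, h₁, h₂, h₃, h₁₂, h₁₃, h₂₃⟩

lemma exists_adj_adj_ne_of_three_le_deg {x : V} (h : 3 ≤ deg G x) (w : V) :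
    ∃ y₁ y₂, G.Adj x y₁ ∧ G.Adj x y₂ ∧ y₁ ≠ w ∧ y₂ ≠ w ∧ y₁ ≠ y₂ := by
  have := Set.ncard_le_ncard_sdiff_add_ncard (G.neighborSet x) {w}
  rw [Set.ncard_singleton] at this
  obtain ⟨y₁, y₂, ⟨h₁, h₁w⟩, ⟨h₂, h₂w⟩, hne⟩ :=
    (Set.one_lt_ncard_iff (s := G.neighborSet x \ {w}) (Set.toFinite _)).mp
      (by unfold deg at h; omega)
  exact ⟨y₁, y₂, h₁, h₂, h₁w, h₂w, hne⟩

lemma Connected.two_le_deg_of_between (hG : G.Connected) {a x b : V} (h : G.Between a x b)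
    (ha : x ≠ a) (hb : x ≠ b) : 2 ≤ deg G x := by
  obtain ⟨ga, hga, hxa⟩ := hG.exists_adj_mem_branch ha
  obtain ⟨gb, hgb, hxb⟩ := hG.exists_adj_mem_branch hb
  exact two_le_deg hga hgb fun he => hG.not_between_of_mem_branch hxa (he ▸ hxb) h

lemma Connected.three_le_deg_of_median (hG : G.Connected) {a b c m : V}
    (hab : G.Between a m b) (hac : G.Between a m c) (hbc : G.Between b m c)
    (ha : m ≠ a) (hb : m ≠ b) (hc : m ≠ c) : 3 ≤ deg G m := by
  obtain ⟨ga, hga, hma⟩ := hG.exists_adj_mem_branch ha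
  obtain ⟨gb, hgb, hmb⟩ := hG.exists_adj_mem_branch hb
  obtain ⟨gc, hgc, hmc⟩ := hG.exists_adj_mem_branch hc
  exact three_le_deg hga hgb hgc (fun he => hG.not_between_of_mem_branch hma (he ▸ hmb) hab)
    (fun he => hG.not_between_of_mem_branch hma (he ▸ hmc) hac)
    (fun he => hG.not_between_of_mem_branch hmb (he ▸ hmc) hbc)

/-- All neighbours of such an `r` are the first step from `r` towards `a`. -/
lemma IsTree.deg_le_one_of_forall_adj_dist_le (hT : T.IsTree) {a r : V}
    (h : ∀ y, T.Adj r y → T.dist a y ≤ T.dist a r) : deg T r ≤ 1 := by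
  have toward : ∀ y, T.Adj r y → a ∈ T.branch r y := fun y hy =>
    (hT.mem_branch_or_between_of_adj hy a).resolve_right fun hb => by
      have := h y hy
      rw [Between, dist_eq_one_iff_adj.mpr hy] at hb
      omega
  exact (Set.ncard_le_one).mpr fun y hy y' hy' =>
    hT.eq_of_mem_branch hy hy' (toward y hy) (toward y' hy')

lemma IsTree.exists_isEndVertex_mem_branch (hT : T.IsTree) {c g : V} (hg : T.Adj c g) :
    ∃ ℓ ∈ T.branch c g, IsEndVertex T ℓ := by
  obtain ⟨ℓ, hℓ, hmax⟩ := Set.exists_max_image (T.branch c g) (T.dist c) (Set.toFinite _)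
    ⟨g, hg.mem_branch⟩
  have hℓc : ℓ ≠ c := fun h => self_notMem_branch c g (h ▸ hℓ)
  obtain ⟨w, hw, -⟩ := hT.connected.exists_adj_mem_branch hℓc
  refine ⟨ℓ, hℓ, le_antisymm (hT.deg_le_one_of_forall_adj_dist_le (a := c) fun y hy => ?_)
    (deg_pos_of_adj hw)⟩
  by_contra! hlt
  have hb : T.Between c ℓ y := (hT.mem_branch_or_between_of_adj hy c).resolve_left fun hc => by
    rw [branch, Set.mem_ofPred_eq, dist_comm, dist_comm (u := ℓ)] at hc
    omega
  exact hlt.not_ge (hmax y (hT.connected.mem_branch_of_between hg hℓ hb))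

lemma IsTree.dist_injective_of_deg_le_two (hT : T.IsTree) {r : V} (hr : deg T r ≤ 1)
    (hdeg : ∀ v, deg T v ≤ 2) : Function.Injective (T.dist r) := by
  intro x y hxy
  by_contra hne
  obtain ⟨m, hxy', hxr, hyr, hmx, hmy⟩ := hT.exists_median_ne_of_dist_eq hne hxy
  obtain rfl | hmr := eq_or_ne m r
  · have := hT.connected.two_le_deg_of_between hxy' hmx hmy
    omega
  · have := hT.connected.three_le_deg_of_median hxy' hxr hyr hmx hmy hmr
    have := hdeg m
    omega

end Finite

lemma IsTree.nonempty_iso_pathGraph [Fintype V] (hT : T.IsTree) (hdeg : ∀ v, deg T v ≤ 2) :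
    Nonempty (T ≃g pathGraph (Fintype.card V)) := by
  obtain ⟨a⟩ := hT.connected.nonempty
  have : Nonempty V := ⟨a⟩
  obtain ⟨r, hr⟩ := Finite.exists_max (T.dist a)
  have hinj := hT.dist_injective_of_deg_le_two
    (hT.deg_le_one_of_forall_adj_dist_le fun y _ => hr y) hdeg
  let f : V → Fin (Fintype.card V) := fun v =>
    ⟨T.dist r v, by
      obtain ⟨p, hp, hlen⟩ := hT.connected.exists_path_of_dist r v
      exact hlen ▸ hp.length_lt⟩
  have hf : Function.Bijective f :=
    (Fintype.bijective_iff_injective_and_card f).mpr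
      ⟨fun x y h => hinj (congrArg Fin.val h), (Fintype.card_fin _).symm⟩
  have step : ∀ a b, T.dist r a + 1 = T.dist r b → T.Adj a b := by
    intro a b h
    have hbr : b ≠ r := by rintro rfl; simp at h
    obtain ⟨g, hg, hgr⟩ := hT.connected.exists_adj_mem_branch hbr
    rw [branch, Set.mem_ofPred_eq, dist_comm, dist_comm (u := b)] at hgr
    rw [hinj (a₁ := a) (a₂ := g) (by omega)]
    exact hg.symm
  refine ⟨⟨Equiv.ofBijective f hf, fun {a b} => ?_⟩⟩
  simp only [Equiv.ofBijective_apply, pathGraph_adj, f]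
  refine ⟨fun h => h.elim (step a b) fun h => (step b a h).symm, fun h => ?_⟩
  rcases hT.dist_eq_dist_add_one_of_adj r h with h' | h' <;> omega

lemma IsTree.exists_isMajorVertex [Fintype V] (hT : T.IsTree)
    (hnp : ¬ Nonempty (T ≃g pathGraph (Fintype.card V))) : ∃ v, IsMajorVertex T v := by
  by_contra! h
  refine hnp (hT.nonempty_iso_pathGraph fun v => ?_)
  have := h v
  unfold IsMajorVertex at this
  omega

lemma IsTerminalOf.eq {ℓ v v' : V} (h : IsTerminalOf T ℓ v) (h' : IsTerminalOf T ℓ v') :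
    v = v' := by
  by_contra hne
  have := h.2.2 v' h'.2.1 (Ne.symm hne)
  have := h'.2.2 v h.2.1 hne
  omega

lemma IsTerminalOf.ne {ℓ v : V} (h : IsTerminalOf T ℓ v) : ℓ ≠ v := by
  rintro rfl
  have h₁ : deg T ℓ = 1 := h.1
  have h₃ : 3 ≤ deg T ℓ := h.2.1
  omega

lemma IsTerminalOf.dist_le {ℓ v w : V} (h : IsTerminalOf T ℓ v) (hw : IsMajorVertex T w) :
    T.dist ℓ v ≤ T.dist ℓ w := by
  obtain rfl | hne := eq_or_ne w v
  · exact le_rfl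
  · exact (h.2.2 w hw hne).le

open Classical in
/-- The major vertex of which `ℓ` is a terminal vertex (junk value `ℓ` if there is none). -/
noncomputable def majorOf (T : SimpleGraph V) (ℓ : V) : V :=
  if h : ∃ v, IsTerminalOf T ℓ v then h.choose else ℓ

lemma IsTerminalOf.majorOf_eq {ℓ v : V} (h : IsTerminalOf T ℓ v) : majorOf T ℓ = v := by
  have hex : ∃ v, IsTerminalOf T ℓ v := ⟨v, h⟩
  rw [majorOf, dif_pos hex]
  exact hex.choose_spec.eq h

def leg (T : SimpleGraph V) (ℓ : V) : Set V :=
  {x | T.Between ℓ x (majorOf T ℓ) ∧ x ≠ majorOf T ℓ}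

def core (T : SimpleGraph V) : Set V :=
  {x | IsMajorVertex T x ∨ IsInteriorDeg2 T x}

section Structure

variable [Finite V]

/-- The nearest major vertex is unique: two equidistant ones would have a median of degree
at least three that is nearer still. -/
lemma IsTree.exists_isTerminalOf (hT : T.IsTree) (hM : ∃ v, IsMajorVertex T v) {ℓ : V}
    (hℓ : IsEndVertex T ℓ) : ∃ v, IsTerminalOf T ℓ v := by
  obtain ⟨v, hv, hmin⟩ :=
    Set.exists_min_image {v | IsMajorVertex T v} (T.dist ℓ) (Set.toFinite _) hM
  refine ⟨v, hℓ, hv, fun w hw hwv => lt_of_le_of_ne (hmin w hw) fun heq => ?_⟩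
  obtain ⟨m, hvw, hvℓ, hwℓ, hmv, hmw⟩ := hT.exists_median_ne_of_dist_eq hwv.symm heq
  obtain rfl | hmℓ := eq_or_ne m ℓ
  · have := hT.connected.two_le_deg_of_between hvw hmv hmw
    have : deg T m = 1 := hℓ
    omega
  · have := hmin m (hT.connected.three_le_deg_of_median hvw hvℓ hwℓ hmv hmw hmℓ)
    have := hT.connected.pos_dist_of_ne hmv.symm
    have c₁ : T.dist ℓ v = T.dist v ℓ := dist_comm
    have c₂ : T.dist ℓ m = T.dist m ℓ := dist_comm
    unfold Between at hvℓ
    omega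

lemma IsTree.isTerminalOf_majorOf (hT : T.IsTree) (hM : ∃ v, IsMajorVertex T v) {ℓ : V}
    (hℓ : IsEndVertex T ℓ) : IsTerminalOf T ℓ (majorOf T ℓ) := by
  obtain ⟨v, hv⟩ := hT.exists_isTerminalOf hM hℓ
  rwa [hv.majorOf_eq]

lemma IsTree.self_mem_leg (hT : T.IsTree) (hM : ∃ v, IsMajorVertex T v) {ℓ : V}
    (hℓ : IsEndVertex T ℓ) : ℓ ∈ leg T ℓ :=
  ⟨between_self_left _ _, (hT.isTerminalOf_majorOf hM hℓ).ne⟩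

lemma IsTree.eq_of_mem_leg (hT : T.IsTree) {ℓ ℓ' : V} (hℓ' : IsEndVertex T ℓ')
    (h : ℓ' ∈ leg T ℓ) : ℓ' = ℓ := by
  by_contra hne
  have := hT.connected.two_le_deg_of_between h.1 hne h.2
  have : deg T ℓ' = 1 := hℓ'
  omega

lemma IsTree.not_isMajorVertex_of_mem_leg (hT : T.IsTree) (hM : ∃ v, IsMajorVertex T v)
    {ℓ x : V} (hℓ : IsEndVertex T ℓ) (hx : x ∈ leg T ℓ) : ¬ IsMajorVertex T x := fun hmaj => by
  have := (hT.isTerminalOf_majorOf hM hℓ).2.2 x hmaj hx.2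
  have h := hx.1
  unfold Between at h
  omega

lemma IsTree.between_majorOf_of_notMem_leg (hT : T.IsTree) (hM : ∃ v, IsMajorVertex T v)
    {ℓ y : V} (hℓ : IsEndVertex T ℓ) (hy : y ∉ leg T ℓ) : T.Between ℓ (majorOf T ℓ) y := by
  obtain ⟨m, hℓv, hℓy, hvy⟩ := hT.exists_median ℓ (majorOf T ℓ) y
  by_cases hmv : m = majorOf T ℓ
  · exact hmv ▸ hℓy
  have hm : m ∈ leg T ℓ := ⟨hℓv, hmv⟩
  have hmy : m ≠ y := by rintro rfl; exact hy hm
  obtain rfl | hmℓ := eq_or_ne m ℓ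
  · have := hT.connected.two_le_deg_of_between hvy hmv hmy
    have : deg T m = 1 := hℓ
    omega
  · exact absurd (hT.connected.three_le_deg_of_median hℓv hℓy hvy hmℓ hmv hmy)
      (hT.not_isMajorVertex_of_mem_leg hM hℓ hm)

lemma IsTree.adj_gate_majorOf (hT : T.IsTree) (hM : ∃ v, IsMajorVertex T v) {ℓ : V}
    (hℓ : IsEndVertex T ℓ) : T.Adj (majorOf T ℓ) (T.gate (majorOf T ℓ) ℓ) :=
  (hT.connected.gate_spec (hT.isTerminalOf_majorOf hM hℓ).ne.symm).1

lemma IsTree.leg_eq_branch_gate (hT : T.IsTree) (hM : ∃ v, IsMajorVertex T v) {ℓ : V}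
    (hℓ : IsEndVertex T ℓ) : leg T ℓ = T.branch (majorOf T ℓ) (T.gate (majorOf T ℓ) ℓ) := by
  obtain ⟨hg, hℓg⟩ := hT.connected.gate_spec (hT.isTerminalOf_majorOf hM hℓ).ne.symm
  ext x
  refine ⟨fun hx => ?_, fun hx => by_contra fun hxl => hT.connected.not_between_of_mem_branch
    hℓg hx (hT.between_majorOf_of_notMem_leg hM hℓ hxl)⟩
  obtain ⟨g', hg', hxg'⟩ := hT.connected.exists_adj_mem_branch hx.2.symm
  have hℓg' := hT.connected.mem_branch_of_between hg' hxg' hx.1.symm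
  rwa [hT.eq_of_mem_branch hg' hg hℓg' hℓg] at hxg'

lemma IsTree.gate_majorOf_mem_leg (hT : T.IsTree) (hM : ∃ v, IsMajorVertex T v) {ℓ : V}
    (hℓ : IsEndVertex T ℓ) : T.gate (majorOf T ℓ) ℓ ∈ leg T ℓ := by
  rw [hT.leg_eq_branch_gate hM hℓ]
  exact (hT.adj_gate_majorOf hM hℓ).mem_branch

lemma IsTree.between_majorOf_of_mem_leg (hT : T.IsTree) (hM : ∃ v, IsMajorVertex T v)
    {ℓ x y : V} (hℓ : IsEndVertex T ℓ) (hx : x ∈ leg T ℓ) (hy : y ∉ leg T ℓ) :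
    T.Between y (majorOf T ℓ) x := by
  rw [hT.leg_eq_branch_gate hM hℓ] at hx hy
  exact hT.between_of_notMem_branch (hT.adj_gate_majorOf hM hℓ) hx hy

lemma IsTree.disjoint_leg (hT : T.IsTree) (hM : ∃ v, IsMajorVertex T v) {ℓ₁ ℓ₂ : V}
    (hℓ₁ : IsEndVertex T ℓ₁) (hℓ₂ : IsEndVertex T ℓ₂) (hne : ℓ₁ ≠ ℓ₂) :
    Disjoint (leg T ℓ₁) (leg T ℓ₂) := by
  refine Set.disjoint_left.mpr fun x hx₁ hx₂ => ?_
  have hℓ₂₁ : ℓ₂ ∉ leg T ℓ₁ := fun h => hne (hT.eq_of_mem_leg hℓ₂ h).symm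
  rw [hT.leg_eq_branch_gate hM hℓ₁] at hx₁ hℓ₂₁
  -- the major vertex of `ℓ₁` would be nearer to `ℓ₂` than the major vertex of `ℓ₂`
  have h₁ := hT.between_of_notMem_branch (hT.adj_gate_majorOf hM hℓ₁) hx₁ hℓ₂₁
  have h₂ := hx₂.1
  have := (hT.isTerminalOf_majorOf hM hℓ₂).dist_le (hT.isTerminalOf_majorOf hM hℓ₁).2.1
  have := hT.connected.pos_dist_of_ne (u := majorOf T ℓ₁) (v := x) fun h => by
    subst h; exact self_notMem_branch _ _ hx₁
  unfold Between at h₁ h₂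
  omega

lemma IsTree.notMem_leg_of_mem_core (hT : T.IsTree) (hM : ∃ v, IsMajorVertex T v) {ℓ x : V}
    (hℓ : IsEndVertex T ℓ) (hx : x ∈ core T) : x ∉ leg T ℓ := fun hxl =>
  hx.elim (hT.not_isMajorVertex_of_mem_leg hM hℓ hxl) fun hint =>
    hint.2 ⟨hint.1, _, ℓ, hT.isTerminalOf_majorOf hM hℓ, hxl.1⟩

lemma IsTree.mem_core_or_exists_mem_leg (hT : T.IsTree) (hM : ∃ v, IsMajorVertex T v) (x : V) :
    x ∈ core T ∨ ∃ ℓ, IsEndVertex T ℓ ∧ x ∈ leg T ℓ := by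
  have hpos : 0 < deg T x := by
    obtain ⟨v, hv⟩ := hM
    obtain rfl | hxv := eq_or_ne x v
    · exact lt_of_lt_of_le (by norm_num) hv
    · obtain ⟨g, hg, -⟩ := hT.connected.exists_adj_mem_branch hxv
      exact deg_pos_of_adj hg
  by_cases h₃ : IsMajorVertex T x
  · exact Or.inl (Or.inl h₃)
  unfold IsMajorVertex at h₃
  obtain h₁ | h₂ : deg T x = 1 ∨ deg T x = 2 := by omega
  · exact Or.inr ⟨x, h₁, hT.self_mem_leg hM h₁⟩
  by_cases hext : IsExteriorDeg2 T x
  · obtain ⟨-, v, ℓ, hterm, hb⟩ := hext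
    refine Or.inr ⟨ℓ, hterm.1, ?_⟩
    rw [leg, hterm.majorOf_eq]
    refine ⟨hb, ?_⟩
    rintro rfl
    have := hterm.2.1
    unfold IsMajorVertex at this
    omega
  · exact Or.inl (Or.inr ⟨h₂, hext⟩)

lemma terminalDeg_eq_zero_iff {v : V} : terminalDeg T v = 0 ↔ ¬ ∃ ℓ, IsTerminalOf T ℓ v := by
  rw [terminalDeg, Set.ncard_eq_zero (Set.toFinite _), Set.eq_empty_iff_forall_notMem]
  simp only [Set.mem_ofPred_eq, not_exists]

lemma ncard_core :
    (core T).ncard = {x | IsInteriorDeg2 T x ∨ (IsMajorVertex T x ∧ terminalDeg T x = 0)}.ncard +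
      {v | IsExteriorMajor T v}.ncard := by
  have hsplit : core T = {x | IsInteriorDeg2 T x ∨ (IsMajorVertex T x ∧ terminalDeg T x = 0)} ∪
      {v | IsExteriorMajor T v} := by
    ext x
    simp only [core, IsExteriorMajor, Set.mem_union, Set.mem_ofPred_eq, terminalDeg_eq_zero_iff]
    tauto
  rw [hsplit]
  refine Set.ncard_union_eq (Set.disjoint_left.mpr ?_)
  rintro x (hint | ⟨-, h₀⟩) ⟨hmaj, hex⟩
  · have : deg T x = 2 := hint.1
    unfold IsMajorVertex at hmaj
    omega
  · exact terminalDeg_eq_zero_iff.mp h₀ hex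

end Structure

section LowerBound

variable {S : Set V}

lemma IsResolving.eq_of_disjoint_branch (hS : IsResolving T S) (hT : T.IsTree) {c g₁ g₂ : V}
    (h₁ : T.Adj c g₁) (h₂ : T.Adj c g₂) (hd₁ : Disjoint S (T.branch c g₁))
    (hd₂ : Disjoint S (T.branch c g₂)) : g₁ = g₂ := by
  by_contra hne
  obtain ⟨z, hz, hzne⟩ := hS g₁ g₂ hne
  have e₁ := hT.between_of_notMem_branch h₁ h₁.mem_branch (Set.disjoint_left.mp hd₁ hz)
  have e₂ := hT.between_of_notMem_branch h₂ h₂.mem_branch (Set.disjoint_left.mp hd₂ hz)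
  rw [Between, dist_eq_one_iff_adj.mpr h₁] at e₁
  rw [Between, dist_eq_one_iff_adj.mpr h₂] at e₂
  omega

lemma IsResolving.eq_of_mem_branch_of_dist_eq (hS : IsResolving T S) (hT : T.IsTree)
    {c g x y : V} (hg : T.Adj c g) (hd : Disjoint S (T.branch c g)) (hx : x ∈ T.branch c g)
    (hy : y ∈ T.branch c g) (h : T.dist c x = T.dist c y) : x = y := by
  by_contra hne
  obtain ⟨z, hz, hzne⟩ := hS x y hne
  have e₁ := hT.between_of_notMem_branch hg hx (Set.disjoint_left.mp hd hz)
  have e₂ := hT.between_of_notMem_branch hg hy (Set.disjoint_left.mp hd hz)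
  unfold Between at e₁ e₂
  omega

/-- A vertex of degree at least three in a branch missing `S` would have two neighbours in the
branch at the same distance from `c`, which `S` cannot tell apart. -/
lemma IsResolving.not_isMajorVertex_of_disjoint_branch [Finite V] (hS : IsResolving T S)
    (hT : T.IsTree) {c g x : V} (hg : T.Adj c g) (hd : Disjoint S (T.branch c g))
    (hx : x ∈ T.branch c g) : ¬ IsMajorVertex T x := by
  intro hmaj
  obtain ⟨w, hw, hcw⟩ :=
    hT.connected.exists_adj_mem_branch fun h : x = c => self_notMem_branch c g (h ▸ hx)
  obtain ⟨y₁, y₂, h₁, h₂, h₁w, h₂w, hne⟩ := exists_adj_adj_ne_of_three_le_deg hmaj w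
  have b₁ := hT.between_of_adj_of_ne hw hcw h₁ h₁w
  have b₂ := hT.between_of_adj_of_ne hw hcw h₂ h₂w
  refine hne (hS.eq_of_mem_branch_of_dist_eq hT hg hd (hT.connected.mem_branch_of_between hg hx b₁)
    (hT.connected.mem_branch_of_between hg hx b₂) ?_)
  rw [Between, dist_eq_one_iff_adj.mpr h₁] at b₁
  rw [Between, dist_eq_one_iff_adj.mpr h₂] at b₂
  omega

lemma IsResolving.not_disjoint_branch_of_isInteriorDeg2 [Finite V] (hS : IsResolving T S)
    (hT : T.IsTree) (hM : ∃ v, IsMajorVertex T v) {c g : V} (hc : IsInteriorDeg2 T c)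
    (hg : T.Adj c g) : ¬ Disjoint S (T.branch c g) := by
  intro hd
  obtain ⟨ℓ, hℓg, hℓ⟩ := hT.exists_isEndVertex_mem_branch hg
  have hterm := hT.isTerminalOf_majorOf hM hℓ
  have hv : majorOf T ℓ ∉ T.branch c g := fun h =>
    hS.not_isMajorVertex_of_disjoint_branch hT hg hd h hterm.2.1
  exact hc.2 ⟨hc.1, _, ℓ, hterm, (hT.between_of_notMem_branch hg hℓg hv).symm⟩

lemma IsConnResolving.mem_of_not_disjoint_branch (hS : IsConnResolving T S) (hT : T.IsTree)
    {c g₁ g₂ : V} (h₁ : T.Adj c g₁) (h₂ : T.Adj c g₂) (hne : g₁ ≠ g₂)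
    (hm₁ : ¬ Disjoint S (T.branch c g₁)) (hm₂ : ¬ Disjoint S (T.branch c g₂)) : c ∈ S := by
  obtain ⟨x, hxS, hx⟩ := Set.not_disjoint_iff.mp hm₁
  obtain ⟨y, hyS, hy⟩ := Set.not_disjoint_iff.mp hm₂
  exact hT.mem_of_between_of_connected_induce hS.2 hxS hyS
    (hT.between_of_mem_branch_of_ne h₁ h₂ hne hx hy)

lemma IsConnResolving.mem_of_isMajorVertex [Finite V] (hS : IsConnResolving T S)
    (hT : T.IsTree) {c : V} (hc : IsMajorVertex T c) : c ∈ S := by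
  obtain ⟨g₁, g₂, g₃, h₁, h₂, h₃, h₁₂, h₁₃, h₂₃⟩ := (Set.two_lt_ncard_iff (Set.toFinite _)).mp hc
  have meets {a b : V} (ha : T.Adj c a) (hb : T.Adj c b) (hab : a ≠ b)
      (hda : Disjoint S (T.branch c a)) : ¬ Disjoint S (T.branch c b) :=
    fun hdb => hab (hS.1.eq_of_disjoint_branch hT ha hb hda hdb)
  by_cases hd₁ : Disjoint S (T.branch c g₁)
  · exact hS.mem_of_not_disjoint_branch hT h₂ h₃ h₂₃ (meets h₁ h₂ h₁₂ hd₁) (meets h₁ h₃ h₁₃ hd₁)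
  by_cases hd₂ : Disjoint S (T.branch c g₂)
  · exact hS.mem_of_not_disjoint_branch hT h₁ h₃ h₁₃ hd₁ (meets h₂ h₃ h₂₃ hd₂)
  · exact hS.mem_of_not_disjoint_branch hT h₁ h₂ h₁₂ hd₁ hd₂

lemma IsConnResolving.mem_of_isInteriorDeg2 [Finite V] (hS : IsConnResolving T S)
    (hT : T.IsTree) (hM : ∃ v, IsMajorVertex T v) {c : V} (hc : IsInteriorDeg2 T c) : c ∈ S := by
  obtain ⟨g₁, g₂, hne, hset⟩ := Set.ncard_eq_two.mp hc.1
  have h₁ : T.Adj c g₁ := show g₁ ∈ T.neighborSet c from hset ▸ Set.mem_insert _ _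
  have h₂ : T.Adj c g₂ := show g₂ ∈ T.neighborSet c from hset ▸ Set.mem_insert_of_mem _ rfl
  exact hS.mem_of_not_disjoint_branch hT h₁ h₂ hne
    (hS.1.not_disjoint_branch_of_isInteriorDeg2 hT hM hc h₁)
    (hS.1.not_disjoint_branch_of_isInteriorDeg2 hT hM hc h₂)

lemma IsConnResolving.core_subset [Finite V] (hS : IsConnResolving T S) (hT : T.IsTree)
    (hM : ∃ v, IsMajorVertex T v) : core T ⊆ S :=
  fun _ hc => hc.elim (hS.mem_of_isMajorVertex hT) (hS.mem_of_isInteriorDeg2 hT hM)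

lemma IsResolving.eq_of_disjoint_leg [Finite V] (hS : IsResolving T S) (hT : T.IsTree)
    (hM : ∃ v, IsMajorVertex T v) {ℓ₁ ℓ₂ : V} (hℓ₁ : IsEndVertex T ℓ₁) (hℓ₂ : IsEndVertex T ℓ₂)
    (hv : majorOf T ℓ₁ = majorOf T ℓ₂) (hd₁ : Disjoint S (leg T ℓ₁))
    (hd₂ : Disjoint S (leg T ℓ₂)) : ℓ₁ = ℓ₂ := by
  rw [hT.leg_eq_branch_gate hM hℓ₁] at hd₁
  rw [hT.leg_eq_branch_gate hM hℓ₂, ← hv] at hd₂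
  have h₂ := hT.adj_gate_majorOf hM hℓ₂
  rw [← hv] at h₂
  have hg := hS.eq_of_disjoint_branch hT (hT.adj_gate_majorOf hM hℓ₁) h₂ hd₁ hd₂
  have : ℓ₂ ∈ leg T ℓ₁ := by
    rw [hT.leg_eq_branch_gate hM hℓ₁, hg, hv]
    exact (hT.connected.gate_spec (hT.isTerminalOf_majorOf hM hℓ₂).ne.symm).2
  exact (hT.eq_of_mem_leg hℓ₂ this).symm

lemma IsConnResolving.ncard_ge [Finite V] (hS : IsConnResolving T S) (hT : T.IsTree)
    (hM : ∃ v, IsMajorVertex T v) :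
    {x | IsInteriorDeg2 T x ∨ (IsMajorVertex T x ∧ terminalDeg T x = 0)}.ncard +
      {v | IsEndVertex T v}.ncard ≤ S.ncard := by
  set H := {ℓ | IsEndVertex T ℓ ∧ ¬ Disjoint S (leg T ℓ)}
  choose! pick hpickS hpickLeg using fun ℓ (hℓ : ℓ ∈ H) => Set.not_disjoint_iff.mp hℓ.2
  have hpick : Set.InjOn pick H := fun ℓ₁ h₁ ℓ₂ h₂ he => by_contra fun hne =>
    Set.disjoint_left.mp (hT.disjoint_leg hM h₁.1 h₂.1 hne) (hpickLeg ℓ₁ h₁) (he ▸ hpickLeg ℓ₂ h₂)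
  have hcore : Disjoint (core T) (pick '' H) := Set.disjoint_left.mpr fun x hx ⟨ℓ, hℓ, hpx⟩ =>
    hT.notMem_leg_of_mem_core hM hℓ.1 hx (hpx ▸ hpickLeg ℓ hℓ)
  have hS₁ : (core T).ncard + H.ncard ≤ S.ncard := by
    rw [← hpick.ncard_image, ← Set.ncard_union_eq hcore]
    exact Set.ncard_le_ncard (Set.union_subset (hS.core_subset hT hM)
      (Set.image_subset_iff.mpr fun ℓ hℓ => hpickS ℓ hℓ))
  -- at each exterior major vertex at most one leg misses `S`
  have hS₂ : ({v | IsEndVertex T v} \ H).ncard ≤ {v | IsExteriorMajor T v}.ncard := by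
    refine Set.ncard_le_ncard_of_injOn (majorOf T) (fun ℓ hℓ => ?_) fun ℓ₁ h₁ ℓ₂ h₂ he => ?_
    · have hterm := hT.isTerminalOf_majorOf hM hℓ.1
      exact ⟨hterm.2.1, ℓ, hterm⟩
    · exact hS.1.eq_of_disjoint_leg hT hM h₁.1 h₂.1 he (not_not.mp fun h => h₁.2 ⟨h₁.1, h⟩)
        (not_not.mp fun h => h₂.2 ⟨h₂.1, h⟩)
  have := Set.ncard_sdiff_add_ncard_of_subset (s := H) (t := {v | IsEndVertex T v}) fun ℓ hℓ => hℓ.1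
  have := ncard_core (T := T)
  omega

end LowerBound

open Classical in
/-- A terminal vertex of `v`, fixed once and for all (junk value `v` if there is none). -/
noncomputable def chosenTerminal (T : SimpleGraph V) (v : V) : V :=
  if h : ∃ ℓ, IsTerminalOf T ℓ v then h.choose else v

lemma isTerminalOf_chosenTerminal {v : V} (h : ∃ ℓ, IsTerminalOf T ℓ v) :
    IsTerminalOf T (chosenTerminal T v) v := by
  rw [chosenTerminal, dif_pos h]
  exact h.choose_spec

section UpperBound

variable [Finite V]

/-- The core together with the top vertex `T.gate (majorOf T ℓ) ℓ` of every leg except the chosen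
one at each exterior major vertex. -/
def minConnResolvingSet (T : SimpleGraph V) : Set V :=
  core T ∪ (fun ℓ => T.gate (majorOf T ℓ) ℓ) ''
    {ℓ | IsEndVertex T ℓ ∧ ℓ ≠ chosenTerminal T (majorOf T ℓ)}

lemma IsTree.eq_gate_of_mem_minConnResolvingSet (hT : T.IsTree) (hM : ∃ v, IsMajorVertex T v)
    {ℓ x : V} (hℓ : IsEndVertex T ℓ) (hx : x ∈ minConnResolvingSet T) (hxl : x ∈ leg T ℓ) :
    x = T.gate (majorOf T ℓ) ℓ := by
  obtain hx | ⟨ℓ', ⟨hℓ', -⟩, rfl⟩ := hx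
  · exact absurd hxl (hT.notMem_leg_of_mem_core hM hℓ hx)
  obtain rfl | hne := eq_or_ne ℓ' ℓ
  · rfl
  · exact absurd hxl (Set.disjoint_left.mp (hT.disjoint_leg hM hℓ' hℓ hne)
      (hT.gate_majorOf_mem_leg hM hℓ'))

/-- Every vertex of a leg outside the set is cut off from the whole set by a single vertex. -/
lemma IsTree.between_mem_minConnResolvingSet (hT : T.IsTree) (hM : ∃ v, IsMajorVertex T v)
    {a b t : V} (ha : a ∈ minConnResolvingSet T) (hb : b ∈ minConnResolvingSet T)
    (h : T.Between a t b) : t ∈ minConnResolvingSet T := by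
  by_contra ht
  obtain htc | ⟨ℓ, hℓ, htl⟩ := hT.mem_core_or_exists_mem_leg hM t
  · exact ht (Or.inl htc)
  obtain ⟨s, hst, hs⟩ : ∃ s, t ≠ s ∧ ∀ y ∈ minConnResolvingSet T, T.Between y s t := by
    by_cases hu : ∃ y ∈ minConnResolvingSet T, y ∈ leg T ℓ
    · obtain ⟨y, hy, hyl⟩ := hu
      have hyu := hT.eq_gate_of_mem_minConnResolvingSet hM hℓ hy hyl
      refine ⟨_, fun he => ht (he ▸ hyu ▸ hy), fun z hz => ?_⟩
      by_cases hzl : z ∈ leg T ℓ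
      · rw [hT.eq_gate_of_mem_minConnResolvingSet hM hℓ hz hzl]
        exact between_self_left _ _
      · have htu : t ∈ T.branch (majorOf T ℓ) (T.gate (majorOf T ℓ) ℓ) :=
          hT.leg_eq_branch_gate hM hℓ ▸ htl
        exact hT.connected.between_trans_right (hT.between_majorOf_of_mem_leg hM hℓ htl hzl)
          ((hT.adj_gate_majorOf hM hℓ).between_of_mem_branch htu)
    · simp only [not_exists, not_and] at hu
      exact ⟨_, htl.2, fun y hy => hT.between_majorOf_of_mem_leg hM hℓ htl (hu y hy)⟩
  exact hT.connected.not_between_of_between_of_between (hs a ha) (hs b hb) hst h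

lemma IsTree.majorOf_eq_of_dist_eq (hT : T.IsTree) (hM : ∃ v, IsMajorVertex T v)
    {ℓx ℓy x y : V} (hℓx : IsEndVertex T ℓx) (hℓy : IsEndVertex T ℓy) (hx : x ∈ leg T ℓx)
    (hy : y ∈ leg T ℓy) (hdx : T.dist (majorOf T ℓx) x = T.dist (majorOf T ℓx) y)
    (hdy : T.dist (majorOf T ℓy) x = T.dist (majorOf T ℓy) y) : majorOf T ℓx = majorOf T ℓy := by
  have ex := hT.between_majorOf_of_mem_leg hM hℓx hx
    (hT.not_isMajorVertex_of_mem_leg hM hℓx · (hT.isTerminalOf_majorOf hM hℓy).2.1)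
  have ey := hT.between_majorOf_of_mem_leg hM hℓy hy
    (hT.not_isMajorVertex_of_mem_leg hM hℓy · (hT.isTerminalOf_majorOf hM hℓx).2.1)
  have := dist_comm (G := T) (u := majorOf T ℓx) (v := majorOf T ℓy)
  unfold Between at ex ey
  exact (hT.connected.dist_eq_zero_iff).mp (by omega)

lemma IsTree.dist_gate_ne_of_mem_leg (hT : T.IsTree) (hM : ∃ v, IsMajorVertex T v)
    {ℓx ℓy x y : V} (hℓx : IsEndVertex T ℓx) (hℓy : IsEndVertex T ℓy) (hne : ℓx ≠ ℓy)
    (hx : x ∈ leg T ℓx) (hy : y ∈ leg T ℓy)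
    (hd : T.dist (majorOf T ℓx) x = T.dist (majorOf T ℓx) y) :
    T.dist (T.gate (majorOf T ℓx) ℓx) x ≠ T.dist (T.gate (majorOf T ℓx) ℓx) y := by
  have hyx : y ∉ leg T ℓx := Set.disjoint_right.mp (hT.disjoint_leg hM hℓx hℓy hne) hy
  have hg := hT.adj_gate_majorOf hM hℓx
  rw [hT.leg_eq_branch_gate hM hℓx] at hx hyx
  have ey := hT.between_of_notMem_branch hg hg.mem_branch hyx
  rw [Between, dist_eq_one_iff_adj.mpr hg] at ey
  rw [branch, Set.mem_ofPred_eq] at hx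
  rw [dist_comm (u := T.gate _ _) (v := y), ← ey, dist_comm (u := y)]
  omega

lemma IsTree.isResolving_minConnResolvingSet (hT : T.IsTree) (hM : ∃ v, IsMajorVertex T v) :
    IsResolving T (minConnResolvingSet T) := by
  intro x y hxy
  by_contra! hres
  have hx : x ∉ minConnResolvingSet T := fun h =>
    hxy ((hT.connected.dist_eq_zero_iff).mp ((hres x h).symm.trans dist_self))
  have hy : y ∉ minConnResolvingSet T := fun h =>
    hxy ((hT.connected.dist_eq_zero_iff).mp ((hres y h).trans dist_self)).symm
  obtain ⟨ℓx, hℓx, hxl⟩ := (hT.mem_core_or_exists_mem_leg hM x).resolve_left (hx ∘ Or.inl)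
  obtain ⟨ℓy, hℓy, hyl⟩ := (hT.mem_core_or_exists_mem_leg hM y).resolve_left (hy ∘ Or.inl)
  have hdx := hres _ (Or.inl (Or.inl (hT.isTerminalOf_majorOf hM hℓx).2.1))
  have hdy := hres _ (Or.inl (Or.inl (hT.isTerminalOf_majorOf hM hℓy).2.1))
  have hv := hT.majorOf_eq_of_dist_eq hM hℓx hℓy hxl hyl hdx hdy
  have hne : ℓx ≠ ℓy := by
    rintro rfl
    exact hxy (hT.eq_of_between_of_dist_eq hxl.1.symm hyl.1.symm hdx)
  -- the top of whichever of the two legs is not the chosen one separates `x` from `y`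
  by_cases hcx : ℓx = chosenTerminal T (majorOf T ℓx)
  · have hcy : ℓy ≠ chosenTerminal T (majorOf T ℓy) := by rw [← hv, ← hcx]; exact hne.symm
    exact hT.dist_gate_ne_of_mem_leg hM hℓy hℓx hne.symm hyl hxl hdy.symm
      (hres _ (Or.inr ⟨ℓy, ⟨hℓy, hcy⟩, rfl⟩)).symm
  · exact hT.dist_gate_ne_of_mem_leg hM hℓx hℓy hne hxl hyl hdx
      (hres _ (Or.inr ⟨ℓx, ⟨hℓx, hcx⟩, rfl⟩))

lemma IsTree.isConnResolving_minConnResolvingSet (hT : T.IsTree) (hM : ∃ v, IsMajorVertex T v) :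
    IsConnResolving T (minConnResolvingSet T) := by
  refine ⟨hT.isResolving_minConnResolvingSet hM, hT.connected_induce_of_between_mem ?_
    fun a ha b hb t => hT.between_mem_minConnResolvingSet hM ha hb⟩
  obtain ⟨v, hv⟩ := hM
  exact ⟨v, Or.inl (Or.inl hv)⟩

lemma IsTree.ncard_setOf_eq_chosenTerminal (hT : T.IsTree) (hM : ∃ v, IsMajorVertex T v) :
    {ℓ | IsEndVertex T ℓ ∧ ℓ = chosenTerminal T (majorOf T ℓ)}.ncard =
      {v | IsExteriorMajor T v}.ncard := by
  rw [← Set.InjOn.ncard_image (f := majorOf T) fun ℓ₁ h₁ ℓ₂ h₂ he => by rw [h₁.2, h₂.2, he]]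
  congr 1
  ext v
  refine ⟨?_, fun ⟨hv, hex⟩ => ?_⟩
  · rintro ⟨ℓ, hℓ, rfl⟩
    have hterm := hT.isTerminalOf_majorOf hM hℓ.1
    exact ⟨hterm.2.1, ℓ, hterm⟩
  · have hterm := isTerminalOf_chosenTerminal hex
    exact ⟨_, ⟨hterm.1, by rw [hterm.majorOf_eq]⟩, hterm.majorOf_eq⟩

lemma IsTree.ncard_minConnResolvingSet (hT : T.IsTree) (hM : ∃ v, IsMajorVertex T v) :
    (minConnResolvingSet T).ncard =
      {x | IsInteriorDeg2 T x ∨ (IsMajorVertex T x ∧ terminalDeg T x = 0)}.ncard +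
        {v | IsEndVertex T v}.ncard := by
  set L := {ℓ | IsEndVertex T ℓ ∧ ℓ ≠ chosenTerminal T (majorOf T ℓ)}
  have hinj : Set.InjOn (fun ℓ => T.gate (majorOf T ℓ) ℓ) L := fun ℓ₁ h₁ ℓ₂ h₂ he => by
    have he : T.gate (majorOf T ℓ₁) ℓ₁ = T.gate (majorOf T ℓ₂) ℓ₂ := he
    exact by_contra fun hne => Set.disjoint_left.mp (hT.disjoint_leg hM h₁.1 h₂.1 hne)
      (hT.gate_majorOf_mem_leg hM h₁.1) (he ▸ hT.gate_majorOf_mem_leg hM h₂.1)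
  have hdisj : Disjoint (core T) ((fun ℓ => T.gate (majorOf T ℓ) ℓ) '' L) :=
    Set.disjoint_left.mpr fun x hx ⟨ℓ, hℓ, hgx⟩ =>
      hT.notMem_leg_of_mem_core hM hℓ.1 hx (hgx ▸ hT.gate_majorOf_mem_leg hM hℓ.1)
  have hends : {v | IsEndVertex T v} =
      L ∪ {ℓ | IsEndVertex T ℓ ∧ ℓ = chosenTerminal T (majorOf T ℓ)} := by
    ext ℓ
    simp only [L, Set.mem_union, Set.mem_ofPred_eq]
    tauto
  rw [minConnResolvingSet, Set.ncard_union_eq hdisj, hinj.ncard_image, ncard_core, hends,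
    Set.ncard_union_eq (Set.disjoint_left.mpr fun _ h h' => h.2 h'.2),
    hT.ncard_setOf_eq_chosenTerminal hM]
  omega

end UpperBound

end SimpleGraph

theorem stmt_12_general {V : Type*} [Fintype V] (T : SimpleGraph V) (hT : T.IsTree)
    (hnp : ¬ Nonempty (T ≃g pathGraph (Fintype.card V))) :
    cdim T =
      {x : V | IsInteriorDeg2 T x ∨ (IsMajorVertex T x ∧ terminalDeg T x = 0)}.ncard +
        {v : V | IsEndVertex T v}.ncard := by
  have hM := hT.exists_isMajorVertex hnp
  have hU := hT.isConnResolving_minConnResolvingSet hM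
  refine le_antisymm ?_ (le_csInf ⟨_, _, hU, rfl⟩ ?_)
  · rw [← hT.ncard_minConnResolvingSet hM]
    exact Nat.sInf_le ⟨_, hU, rfl⟩
  · rintro n ⟨S, hS, rfl⟩
    exact hS.ncard_ge hT hM

/-- Let `T` be a finite tree of order at least 2 that is not a path,
and let `D` be the set of interior degree-two vertices together with major vertices of
terminal degree zero.  Then `cdim(T) = |D| + σ(T)`. -/
theorem stmt_12 {V : Type*} [Fintype V] (T : SimpleGraph V) (hT : T.IsTree)
    (hn : 2 ≤ Fintype.card V)
    (hnp : ¬ Nonempty (T ≃g pathGraph (Fintype.card V))) :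
    cdim T =
      {x : V | IsInteriorDeg2 T x ∨ (IsMajorVertex T x ∧ terminalDeg T x = 0)}.ncard +
        {v : V | IsEndVertex T v}.ncard :=
  stmt_12_general T hT hnp
end

section
/- For every integer k ≥ 1, there exists a finite simple connected graph G such that cdim(G) − dim(G) = k. -/
/-!
Two leaves with a common neighbour are twins: every other vertex is at the same distance from
both, so every resolving set contains one of them. In the double broom, a path on `n + 2`
vertices with two twin leaves hanging off each end, one leaf from each pair already resolves the
graph, so `dim = 2`. A connected resolving set, however, contains a leaf from each pair, which
are at distance `n + 3`, so it has at least `n + 4` vertices, and a geodesic between them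
attains this. This gives every `k ≥ 2`; for `k = 1` the claw `K₁,₃` has `dim = 2` (two of its three
pairwise twin leaves) and `cdim = 3`.

Distances from a vertex `a` are certified by explicit formulas `f` with `f a = 0` that grow by at
most one along edges and decrease along some edge at every other vertex.
-/

open SimpleGraph

variable {V : Type*}

section General

variable {W : Type*} {G : SimpleGraph W}

lemma IsResolving.mono {S T : Set W} (hS : IsResolving G S) (hST : S ⊆ T) :
    IsResolving G T := fun x y hxy =>
  let ⟨z, hz, hne⟩ := hS x y hxy
  ⟨z, hST hz, hne⟩

lemma IsResolving.mem_or_mem_of_twins {S : Set W} (hS : IsResolving G S) {x y : W}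
    (hxy : x ≠ y) (htwin : ∀ z, z ≠ x → z ≠ y → G.dist z x = G.dist z y) : x ∈ S ∨ y ∈ S := by
  obtain ⟨z, hz, hne⟩ := hS x y hxy
  by_contra! h
  exact hne (htwin z (by rintro rfl; exact h.1 hz) (by rintro rfl; exact h.2 hz))

lemma dist_lt_ncard_of_connected_induce [Finite W] {S : Set W} (hS : (G.induce S).Connected)
    {u w : W} (hu : u ∈ S) (hw : w ∈ S) : G.dist u w < S.ncard := by
  have := Fintype.ofFinite S
  obtain ⟨p, hp, -⟩ := (hS ⟨u, hu⟩ ⟨w, hw⟩).exists_path_of_dist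
  calc G.dist u w ≤ (p.map (Embedding.induce S).toHom).length := dist_le _
    _ = p.length := Walk.length_map _ _
    _ < Fintype.card S := hp.length_lt
    _ = S.ncard := by rw [Fintype.card_eq_nat_card, Nat.card_coe_set_eq]

lemma le_add_length_of_lipschitz (f : W → ℕ) (hlip : ∀ u v, G.Adj u v → f v ≤ f u + 1)
    {u v : W} (p : G.Walk u v) : f v ≤ f u + p.length := by
  induction p with
  | nil => simp
  | cons h p ih =>
    have := hlip _ _ h
    rw [Walk.length_cons]
    omega

lemma exists_walk_length_le_of_descent {a : W} (f : W → ℕ)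
    (hdesc : ∀ v ≠ a, ∃ u, G.Adj u v ∧ f u < f v) (v : W) :
    ∃ p : G.Walk a v, p.length ≤ f v := by
  induction hv : f v using Nat.strong_induction_on generalizing v with
  | _ m ih =>
    by_cases hva : v = a
    · subst hva
      exact ⟨.nil, Nat.zero_le _⟩
    · obtain ⟨u, huv, hlt⟩ := hdesc v hva
      obtain ⟨p, hp⟩ := ih (f u) (hv ▸ hlt) u rfl
      exact ⟨p.concat huv, by rw [Walk.length_concat]; omega⟩

lemma connected_of_descent {a : W} (f : W → ℕ) (hdesc : ∀ v ≠ a, ∃ u, G.Adj u v ∧ f u < f v) :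
    G.Connected :=
  G.connected_iff_exists_forall_reachable.mpr
    ⟨a, fun v => (exists_walk_length_le_of_descent f hdesc v).elim fun p _ => p.reachable⟩

lemma dist_eq_of_lipschitz_of_descent {a : W} (f : W → ℕ) (ha : f a = 0)
    (hlip : ∀ u v, G.Adj u v → f v ≤ f u + 1) (hdesc : ∀ v ≠ a, ∃ u, G.Adj u v ∧ f u < f v)
    (v : W) : G.dist a v = f v := by
  obtain ⟨p, hp⟩ := exists_walk_length_le_of_descent f hdesc v
  obtain ⟨q, hq⟩ := p.reachable.exists_walk_length_eq_dist
  have := le_add_length_of_lipschitz f hlip q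
  have := dist_le p
  omega

lemma metricDim_eq_of_forall_le {m : ℕ} (hm : ∃ S, IsResolving G S ∧ S.ncard = m)
    (hle : ∀ S, IsResolving G S → m ≤ S.ncard) : metricDim G = m :=
  IsLeast.csInf_eq ⟨hm, fun _ ⟨S, hS, h⟩ => h ▸ hle S hS⟩

lemma cdim_eq_of_forall_le {m : ℕ} (hm : ∃ S, IsConnResolving G S ∧ S.ncard = m)
    (hle : ∀ S, IsConnResolving G S → m ≤ S.ncard) : cdim G = m :=
  IsLeast.csInf_eq ⟨hm, fun _ ⟨S, hS, h⟩ => h ▸ hle S hS⟩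

end General

def claw : SimpleGraph (Fin 4) := SimpleGraph.fromRel fun i _ => i = 0

namespace claw

def leafDist (s i : Fin 4) : ℕ := if i = s then 0 else if i = 0 then 1 else 2

lemma adj_iff {i j : Fin 4} : claw.Adj i j ↔ i ≠ j ∧ (i = 0 ∨ j = 0) := by
  simp [claw]

lemma dist_leaf {s : Fin 4} (hs : s ≠ 0) (v : Fin 4) : claw.dist s v = leafDist s v := by
  refine dist_eq_of_lipschitz_of_descent (leafDist s) (by simp [leafDist])
    (fun u v h => ?_) (fun v hv => ⟨if v = 0 then s else 0, ?_⟩) v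
  · rw [adj_iff] at h
    revert s u v
    decide
  · rw [adj_iff]
    revert s v
    decide

lemma dist_twins {s s' z : Fin 4} (hs : s ≠ 0) (hs' : s' ≠ 0) (hz : z ≠ s) (hz' : z ≠ s') :
    claw.dist z s = claw.dist z s' := by
  rw [dist_comm, dist_leaf hs, dist_comm, dist_leaf hs']
  revert s s' z
  decide

lemma connected : claw.Connected :=
  connected_of_descent (a := 0) Fin.val fun _ hv =>
    ⟨0, adj_iff.mpr ⟨hv.symm, .inl rfl⟩, Fin.pos_iff_ne_zero.mpr hv⟩

lemma isResolving_pair : IsResolving claw {1, 2} := by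
  intro x y hxy
  by_contra! h
  have h1 := h 1 (by simp)
  have h2 := h 2 (by simp)
  rw [dist_leaf (by decide), dist_leaf (by decide)] at h1 h2
  clear h
  revert x y
  decide

lemma IsResolving.exists_two_leaves {S : Set (Fin 4)} (hS : IsResolving claw S) :
    ∃ u ∈ S, ∃ w ∈ S, u ≠ 0 ∧ w ≠ 0 ∧ u ≠ w := by
  have hpair (s s' : Fin 4) (hs : s ≠ 0) (hs' : s' ≠ 0) (hss' : s ≠ s') : s ∈ S ∨ s' ∈ S :=
    hS.mem_or_mem_of_twins hss' fun _ hz hz' => dist_twins hs hs' hz hz'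
  by_cases h1 : 1 ∈ S
  · rcases hpair 2 3 (by decide) (by decide) (by decide) with h | h
    · exact ⟨1, h1, 2, h, by decide⟩
    · exact ⟨1, h1, 3, h, by decide⟩
  · have h2 := (hpair 1 2 (by decide) (by decide) (by decide)).resolve_left h1
    have h3 := (hpair 1 3 (by decide) (by decide) (by decide)).resolve_left h1
    exact ⟨2, h2, 3, h3, by decide⟩

lemma metricDim_eq : metricDim claw = 2 := by
  refine metricDim_eq_of_forall_le ⟨_, isResolving_pair, Set.ncard_pair (by decide)⟩ fun S hS => ?_
  obtain ⟨u, hu, w, hw, -, -, huw⟩ := IsResolving.exists_two_leaves hS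
  exact (Set.one_lt_ncard_iff (Set.toFinite S)).mpr ⟨u, w, hu, hw, huw⟩

lemma connected_induce_triple : (claw.induce {0, 1, 2}).Connected :=
  connected_of_descent (a := ⟨0, by simp⟩) (fun v => v.1.val) fun v hv =>
    ⟨⟨0, by simp⟩, adj_iff.mpr ⟨fun h => hv (Subtype.ext h).symm, .inl rfl⟩,
      Fin.pos_iff_ne_zero.mpr fun h => hv (Subtype.ext h)⟩

lemma cdim_eq : cdim claw = 3 := by
  have htriple : ({0, 1, 2} : Set (Fin 4)).ncard = 3 :=
    Set.ncard_eq_three.mpr ⟨0, 1, 2, by decide, by decide, by decide, rfl⟩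
  refine cdim_eq_of_forall_le
    ⟨{0, 1, 2}, ⟨isResolving_pair.mono (by simp), connected_induce_triple⟩, htriple⟩
    fun S ⟨hS, hconn⟩ => ?_
  obtain ⟨u, hu, w, hw, hu0, hw0, huw⟩ := IsResolving.exists_two_leaves hS
  have hdist : claw.dist u w = 2 := by
    rw [dist_leaf hu0]
    clear hu hw
    revert u w
    decide
  have := dist_lt_ncard_of_connected_induce hconn hu hw
  omega

end claw

/-- Vertices `0, 1` and `n + 4, n + 5` are two pairs of twin leaves, attached to the two ends
of the path `2, 3, …, n + 3`. -/
def doubleBroom (n : ℕ) : SimpleGraph (Fin (n + 6)) :=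
  SimpleGraph.fromRel fun i j =>
    (i.val ≤ 1 ∧ j.val = 2) ∨ (2 ≤ i.val ∧ i.val + 1 = j.val ∧ j.val ≤ n + 3) ∨
      (n + 4 ≤ i.val ∧ j.val = n + 3)

namespace doubleBroom

variable {n : ℕ}

def leftDist (n s i : ℕ) : ℕ :=
  if i = s then 0 else if i ≤ 1 then 2 else if i ≤ n + 3 then i - 1 else n + 3

def rightDist (n t i : ℕ) : ℕ :=
  if i = t then 0 else if n + 4 ≤ i then 2 else if 2 ≤ i then n + 4 - i else n + 3

/-- The geodesic from `0` to `n + 4`. -/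
def spine (n : ℕ) : Set (Fin (n + 6)) := {⟨1, by omega⟩, ⟨n + 5, by omega⟩}ᶜ

lemma adj_iff {i j : Fin (n + 6)} : (doubleBroom n).Adj i j ↔ i.val ≠ j.val ∧
    ((i.val ≤ 1 ∧ j.val = 2) ∨ (2 ≤ i.val ∧ i.val + 1 = j.val ∧ j.val ≤ n + 3) ∨
      (n + 4 ≤ i.val ∧ j.val = n + 3) ∨
    (j.val ≤ 1 ∧ i.val = 2) ∨ (2 ≤ j.val ∧ j.val + 1 = i.val ∧ i.val ≤ n + 3) ∨
      (n + 4 ≤ j.val ∧ i.val = n + 3)) := by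
  simp only [doubleBroom, fromRel_adj, ne_eq, Fin.ext_iff, or_assoc]

lemma mem_spine {v : Fin (n + 6)} : v ∈ spine n ↔ v.val ≠ 1 ∧ v.val ≠ n + 5 := by
  simp [spine, Fin.ext_iff]

lemma exists_adj_leftDist_lt {s v : Fin (n + 6)} (hs : s.val ≤ 1) (hv : v ≠ s) :
    ∃ u, (doubleBroom n).Adj u v ∧ leftDist n s u < leftDist n s v := by
  have hv : v.val ≠ s.val := Fin.val_ne_of_ne hv
  refine ⟨⟨if v.val ≤ 1 then 2 else if v.val = 2 then s else if v.val ≤ n + 3 then v - 1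
    else n + 3, by split_ifs <;> omega⟩, ?_, ?_⟩
  · rw [adj_iff]
    dsimp only
    split_ifs <;> omega
  · unfold leftDist
    dsimp only
    split_ifs <;> omega

lemma exists_adj_rightDist_lt {t v : Fin (n + 6)} (ht : n + 4 ≤ t.val) (hv : v ≠ t) :
    ∃ u, (doubleBroom n).Adj u v ∧ rightDist n t u < rightDist n t v := by
  have hv : v.val ≠ t.val := Fin.val_ne_of_ne hv
  refine ⟨⟨if n + 4 ≤ v.val then n + 3 else if v.val = n + 3 then t else if 2 ≤ v.val then v + 1
    else 2, by split_ifs <;> omega⟩, ?_, ?_⟩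
  · rw [adj_iff]
    dsimp only
    split_ifs <;> omega
  · unfold rightDist
    dsimp only
    split_ifs <;> omega

lemma dist_left {s : Fin (n + 6)} (hs : s.val ≤ 1) (v : Fin (n + 6)) :
    (doubleBroom n).dist s v = leftDist n s v := by
  refine dist_eq_of_lipschitz_of_descent (fun v : Fin (n + 6) => leftDist n s v)
    (by simp [leftDist]) (fun u v h => ?_) (fun v hv => exists_adj_leftDist_lt hs hv) v
  rw [adj_iff] at h
  unfold leftDist
  split_ifs <;> omega

lemma dist_right {t : Fin (n + 6)} (ht : n + 4 ≤ t.val) (v : Fin (n + 6)) :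
    (doubleBroom n).dist t v = rightDist n t v := by
  refine dist_eq_of_lipschitz_of_descent (fun v : Fin (n + 6) => rightDist n t v)
    (by simp [rightDist]) (fun u v h => ?_) (fun v hv => exists_adj_rightDist_lt ht hv) v
  rw [adj_iff] at h
  unfold rightDist
  split_ifs <;> omega

lemma connected : (doubleBroom n).Connected :=
  connected_of_descent _ fun v hv => exists_adj_leftDist_lt (s := 0) (by simp) hv

lemma connected_induce_spine : ((doubleBroom n).induce (spine n)).Connected := by
  refine connected_of_descent (a := ⟨⟨0, by omega⟩, mem_spine.mpr (by simp)⟩)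
    (fun v => v.1.val) fun ⟨v, hv⟩ hva => ?_
  rw [mem_spine] at hv
  have hv0 : v.val ≠ 0 := fun h => hva (Subtype.ext (Fin.ext h))
  refine ⟨⟨⟨if v.val = 2 then 0 else v - 1, by split_ifs <;> omega⟩, mem_spine.mpr ?_⟩, ?_, ?_⟩
  · dsimp only
    split_ifs <;> omega
  · simp only [comap_adj, Function.Embedding.coe_subtype, adj_iff]
    split_ifs <;> omega
  · dsimp only
    split_ifs <;> omega

lemma isResolving_pair : IsResolving (doubleBroom n) {⟨0, by omega⟩, ⟨n + 4, by omega⟩} := by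
  intro x y hxy
  by_contra! h
  have h0 := h ⟨0, by omega⟩ (by simp)
  have h4 := h ⟨n + 4, by omega⟩ (by simp)
  rw [dist_left (by simp), dist_left (by simp)] at h0
  rw [dist_right le_rfl, dist_right le_rfl] at h4
  have := x.isLt
  have := y.isLt
  refine hxy (Fin.ext ?_)
  simp only [leftDist, rightDist] at h0 h4
  split_ifs at h0 h4 <;> omega

lemma dist_left_twins {z : Fin (n + 6)} (hz : z.val ≠ 0) (hz' : z.val ≠ 1) :
    (doubleBroom n).dist z ⟨0, by omega⟩ = (doubleBroom n).dist z ⟨1, by omega⟩ := by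
  rw [dist_comm, dist_left (by simp), dist_comm, dist_left le_rfl]
  have := z.isLt
  unfold leftDist
  dsimp only
  split_ifs <;> omega

lemma dist_right_twins {z : Fin (n + 6)} (hz : z.val ≠ n + 4) (hz' : z.val ≠ n + 5) :
    (doubleBroom n).dist z ⟨n + 4, by omega⟩ = (doubleBroom n).dist z ⟨n + 5, by omega⟩ := by
  rw [dist_comm, dist_right le_rfl, dist_comm, dist_right (by simp)]
  have := z.isLt
  unfold rightDist
  dsimp only
  split_ifs <;> omega

lemma IsResolving.exists_left_leaf {S : Set (Fin (n + 6))} (hS : IsResolving (doubleBroom n) S) :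
    ∃ u ∈ S, u.val ≤ 1 := by
  rcases hS.mem_or_mem_of_twins (by simp) fun z hz hz' =>
    dist_left_twins (Fin.val_ne_of_ne hz) (Fin.val_ne_of_ne hz') with h | h
  · exact ⟨_, h, by simp⟩
  · exact ⟨_, h, le_rfl⟩

lemma IsResolving.exists_right_leaf {S : Set (Fin (n + 6))} (hS : IsResolving (doubleBroom n) S) :
    ∃ w ∈ S, n + 4 ≤ w.val := by
  rcases hS.mem_or_mem_of_twins (by simp) fun z hz hz' =>
    dist_right_twins (Fin.val_ne_of_ne hz) (Fin.val_ne_of_ne hz') with h | h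
  · exact ⟨_, h, le_rfl⟩
  · exact ⟨_, h, by simp⟩

lemma metricDim_eq : metricDim (doubleBroom n) = 2 := by
  refine metricDim_eq_of_forall_le ⟨_, isResolving_pair, Set.ncard_pair (by simp)⟩ fun S hS => ?_
  obtain ⟨u, hu, hu1⟩ := IsResolving.exists_left_leaf hS
  obtain ⟨w, hw, hw4⟩ := IsResolving.exists_right_leaf hS
  exact (Set.one_lt_ncard_iff (Set.toFinite S)).mpr ⟨u, w, hu, hw, by rintro rfl; omega⟩

lemma cdim_eq : cdim (doubleBroom n) = n + 4 := by
  have hspine : (spine n).ncard = n + 4 := by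
    rw [spine, Set.ncard_compl, Set.ncard_pair (by simp), Nat.card_eq_fintype_card,
      Fintype.card_fin]
    omega
  refine cdim_eq_of_forall_le ⟨spine n, ⟨isResolving_pair.mono ?_, connected_induce_spine⟩, hspine⟩
    fun S ⟨hS, hconn⟩ => ?_
  · intro v hv
    rw [mem_spine]
    rcases hv with rfl | rfl <;> simp
  obtain ⟨u, hu, hu1⟩ := IsResolving.exists_left_leaf hS
  obtain ⟨w, hw, hw4⟩ := IsResolving.exists_right_leaf hS
  have hdist : (doubleBroom n).dist u w = n + 3 := by
    rw [dist_left hu1, leftDist]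
    split_ifs <;> omega
  have := dist_lt_ncard_of_connected_induce hconn hu hw
  omega

end doubleBroom

/-- For every integer `k ≥ 1`, there is a finite simple connected
graph `G` with `cdim(G) - dim(G) = k`. -/
theorem stmt_15 (k : ℕ) (hk : 1 ≤ k) :
    ∃ (V : Type) (_ : Fintype V) (G : SimpleGraph V), G.Connected ∧
      cdim G = metricDim G + k := by
  rcases k with _ | _ | n
  · omega
  · exact ⟨Fin 4, inferInstance, claw, claw.connected, by rw [claw.cdim_eq, claw.metricDim_eq]⟩
  · exact ⟨Fin (n + 6), inferInstance, doubleBroom n, doubleBroom.connected, by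
      rw [doubleBroom.cdim_eq, doubleBroom.metricDim_eq]; omega⟩
end
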